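/- Let H = K₂ ∨ (complement of K₂) (the 'diamond' graph, K₄ minus an edge), and let v be a vertex of degree 2 in H. Then the line graph L(H) has no kernel-perfect orientation D satisfying d⁺_D(e) ≤ 1 for the two edges incident to v and d⁺_D(e) ≤ 2 for the other three edges. -/
import Mathlib


open SimpleGraph

/-- Adjacency in the line graph `L(G)`: two distinct edges sharing an endpoint. -/
def lineAdj {V : Type*} (G : SimpleGraph V) (e f : G.edgeSet) : Prop :=
  e ≠ f ∧ ∃ x : V, x ∈ (e : Sym2 V) ∧ x ∈ (f : Sym2 V)

/-- `D` is an orientation of the (loopless) adjacency relation `Adj`: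
every arc of `D` is an edge, and every edge gets at least one of its two arcs. -/
def IsOrientation {α : Type*} (Adj : α → α → Prop) (D : α → α → Prop) : Prop :=
  (∀ a b, D a b → Adj a b) ∧ (∀ a b, Adj a b → D a b ∨ D b a)

/-- A digraph (relation) is kernel-perfect if every induced subdigraph has a kernel:
an independent set `S` such that every vertex outside `S` has an out-neighbor in `S`. -/
def KernelPerfect {α : Type*} (D : α → α → Prop) : Prop :=
  ∀ Z : Set α, ∃ S ⊆ Z, (∀ a ∈ S, ∀ b ∈ S, ¬ D a b) ∧
    ∀ z ∈ Z, z ∉ S → ∃ s ∈ S, D z s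

/-- Out-degree of a vertex in a digraph given as a relation. -/
noncomputable def outDeg {α : Type*} (D : α → α → Prop) (a : α) : ℕ := {b | D a b}.ncard

/-- Degree of a vertex. -/
noncomputable def deg {V : Type*} (G : SimpleGraph V) (v : V) : ℕ := (G.neighborSet v).ncard

/-- Maximum degree. -/
noncomputable def maxDeg {V : Type*} (G : SimpleGraph V) : ℕ := sSup (Set.range (deg G))

/-- `G` is `f`-edge-orientable: `L(G)` admits a kernel-perfect orientation with
`1 + d⁺(e) ≤ f e` for every edge `e`. -/
def EdgeOrientable {V : Type*} (G : SimpleGraph V) (f : G.edgeSet → ℕ) : Prop :=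
  ∃ D : G.edgeSet → G.edgeSet → Prop,
    IsOrientation (lineAdj G) D ∧ KernelPerfect D ∧ ∀ e, outDeg D e + 1 ≤ f e

open Classical in
/-- The function `f_{k,v}`: `deg v` on edges incident to `v`, and `k` elsewhere. -/
noncomputable def fkv {V : Type*} (G : SimpleGraph V) (k : ℕ) (v : V) (e : G.edgeSet) : ℕ :=
  if v ∈ (e : Sym2 V) then deg G v else k

/-- `G` is strongly `k`-edge-orientable. -/
def StronglyEdgeOrientable {V : Type*} (G : SimpleGraph V) (k : ℕ) : Prop :=
  ∀ v : V, EdgeOrientable G (fkv G k v)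

/-- `G` is `f`-edge-choosable. -/
def FEdgeChoosable {V : Type*} (G : SimpleGraph V) (f : G.edgeSet → ℕ) : Prop :=
  ∀ ℓ : G.edgeSet → Finset ℕ, (∀ e, f e ≤ (ℓ e).card) →
    ∃ φ : G.edgeSet → ℕ, (∀ e, φ e ∈ ℓ e) ∧
      ∀ e₁ e₂, lineAdj G e₁ e₂ → φ e₁ ≠ φ e₂

/-- `G ∈ G*`: any two distinct odd cycles share at most one edge. -/
def InGStar {V : Type*} (G : SimpleGraph V) : Prop :=
  ∀ (u w : V) (c₁ : G.Walk u u) (c₂ : G.Walk w w),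
    c₁.IsCycle → c₂.IsCycle → Odd c₁.length → Odd c₂.length →
    {e | e ∈ c₁.edges} ≠ {e | e ∈ c₂.edges} →
    ({e | e ∈ c₁.edges} ∩ {e | e ∈ c₂.edges}).ncard ≤ 1

/-- `G` is 2-connected: connected, and still connected after deleting any one vertex. -/
def TwoConn {V : Type*} (G : SimpleGraph V) : Prop :=
  G.Connected ∧ ∀ v : V, (G.induce {w | w ≠ v}).Connected

/-- A block of `G`: a maximal 2-connected subgraph. -/
def IsBlock {V : Type*} (G : SimpleGraph V) (B : G.Subgraph) : Prop :=
  TwoConn B.coe ∧ ∀ B' : G.Subgraph, TwoConn B'.coe → B ≤ B' → B = B'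

/-- Vertex type of the theta graph with path lengths `l`: two hubs
(`Sum.inl false`, `Sum.inl true`) plus the internal vertices of each path. -/
def ThetaVert (l : List ℕ) : Type := Bool ⊕ (Σ i : Fin l.length, Fin (l.get i - 1))

/-- The theta graph `Θ_{l₁,…,l_k}`: two hubs joined by internally disjoint paths,
the `i`-th of length `l i`. -/
def thetaGraph (l : List ℕ) : SimpleGraph (ThetaVert l) :=
  SimpleGraph.fromRel (fun a b =>
    match a, b with
    | Sum.inl false, Sum.inl true => 1 ∈ l
    | Sum.inl false, Sum.inr ⟨_, j⟩ => j.val = 0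
    | Sum.inl true, Sum.inr ⟨i, j⟩ => j.val = l.get i - 2
    | Sum.inr ⟨i, j⟩, Sum.inr ⟨i', j'⟩ => i.val = i'.val ∧ j'.val = j.val + 1
    | _, _ => False)

/-- `v` (outside `c`) touches `w ∈ c`: some `v,w`-path meets `c` only at `w`. -/
def Touches {V : Type*} (G : SimpleGraph V) {u : V} (c : G.Walk u u) (v w : V) : Prop :=
  w ∈ c.support ∧ ∃ p : G.Walk v w, p.IsPath ∧ ∀ x ∈ p.support, x ∈ c.support → x = w

/-- The diamond graph `K₄ − e` on vertices `0 = v, 1 = w, 2 = z, 3 = u`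
with edges `vw, vz, wz, uw, uz`; the vertices `0` and `3` have degree 2. -/
def diamond : SimpleGraph (Fin 4) :=
  SimpleGraph.fromRel (fun a b =>
    (a, b) ∈ [((0 : Fin 4), (1 : Fin 4)), (0, 2), (1, 2), (1, 3), (2, 3)])

instance : DecidableRel diamond.Adj := fun a b =>
  decidable_of_iff _ (SimpleGraph.fromRel_adj _ a b).symm

def E : Fin 5 → diamond.edgeSet
  | 0 => ⟨s(0,1), by decide⟩
  | 1 => ⟨s(0,2), by decide⟩
  | 2 => ⟨s(1,2), by decide⟩
  | 3 => ⟨s(1,3), by decide⟩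
  | 4 => ⟨s(2,3), by decide⟩

lemma Einj : Function.Injective E := by decide
lemma Esurj : Function.Surjective E := by decide

instance (e f : diamond.edgeSet) : Decidable (lineAdj diamond e f) := by
  unfold lineAdj; infer_instance

lemma ladj : ∀ i j : Fin 5, (i,j) ∈ [((0:Fin 5),(1:Fin 5)),(0,2),(0,3),(1,2),(1,4),(2,3),(2,4),(3,4)] →
    lineAdj diamond (E i) (E j) ∧ lineAdj diamond (E j) (E i) := by decide

lemma nladj : ∀ i j : Fin 5, (i = j ∨ (i,j) ∈ [((0:Fin 5),(4:Fin 5)),(4,0),(1,3),(3,1)]) →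
    ¬ lineAdj diamond (E i) (E j) := by decide

def mk5 (a01 a10 a02 a20 a03 a30 a12 a21 a14 a41 a23 a32 a24 a42 a34 a43 : Bool) :
    Fin 5 → Fin 5 → Bool :=
  fun i j =>
    match i, j with
    | 0,1 => a01 | 1,0 => a10 | 0,2 => a02 | 2,0 => a20
    | 0,3 => a03 | 3,0 => a30 | 1,2 => a12 | 2,1 => a21
    | 1,4 => a14 | 4,1 => a41 | 2,3 => a23 | 3,2 => a32
    | 2,4 => a24 | 4,2 => a42 | 3,4 => a34 | 4,3 => a43
    | _,_ => false

set_option maxHeartbeats 8000000 in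
lemma core : ∀ a01 a10 a02 a20 a03 a30 a12 a21 a14 a41 a23 a32 a24 a42 a34 a43 : Bool,
    ((a01||a10) && (a02||a20) && (a03||a30) && (a12||a21) && (a14||a41)
        && (a23||a32) && (a24||a42) && (a34||a43)) = true →
    a01.toNat + a02.toNat + a03.toNat ≤ 1 →
    a10.toNat + a12.toNat + a14.toNat ≤ 1 →
    a20.toNat + a21.toNat + a23.toNat + a24.toNat ≤ 2 →
    a30.toNat + a32.toNat + a34.toNat ≤ 2 →
    a41.toNat + a42.toNat + a43.toNat ≤ 2 →
    ∃ zb : Fin 5 → Bool, ∀ sb : Fin 5 → Bool,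
      ¬ ((∀ j, sb j = true → zb j = true) ∧
         (∀ i j, sb i = true → sb j = true →
            mk5 a01 a10 a02 a20 a03 a30 a12 a21 a14 a41 a23 a32 a24 a42 a34 a43 i j = false) ∧
         (∀ i, zb i = true → sb i = false → ∃ j, sb j = true ∧
            mk5 a01 a10 a02 a20 a03 a30 a12 a21 a14 a41 a23 a32 a24 a42 a34 a43 i j = true)) := by
  decide


open Classical in
/-- `L(diamond)` has no kernel-perfect orientation with
`d⁺(e) ≤ 1` on the two edges incident to the degree-2 vertex `0` and
`d⁺(e) ≤ 2` on the other three edges. -/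
theorem stmt14 :
    ¬ ∃ D : diamond.edgeSet → diamond.edgeSet → Prop,
      IsOrientation (lineAdj diamond) D ∧ KernelPerfect D ∧
      ∀ e : diamond.edgeSet,
        outDeg D e + 1 ≤ (if (0 : Fin 4) ∈ (e : Sym2 (Fin 4)) then 2 else 3) := by
  classical
  rintro ⟨D, ⟨hD1, hD2⟩, hKP, hf⟩
  set a : Fin 5 → Fin 5 → Bool := fun i j => decide (D (E i) (E j)) with ha
  have haT : ∀ i j, a i j = true ↔ D (E i) (E j) := fun i j => decide_eq_true_iff
  -- zero facts
  have hz : ∀ i j : Fin 5, (i = j ∨ (i,j) ∈ [((0:Fin 5),(4:Fin 5)),(4,0),(1,3),(3,1)]) →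
      a i j = false := by
    intro i j h
    exact decide_eq_false (fun hD => nladj i j h (hD1 _ _ hD))
  -- pair facts
  have hp : ∀ i j : Fin 5, (i,j) ∈ [((0:Fin 5),(1:Fin 5)),(0,2),(0,3),(1,2),(1,4),(2,3),(2,4),(3,4)] →
      (a i j || a j i) = true := by
    intro i j h
    rcases hD2 _ _ (ladj i j h).1 with hD | hD
    · simp [(haT i j).mpr hD]
    · simp [(haT j i).mpr hD]
  -- out-degree computation
  have key : ∀ i, outDeg D (E i) =
      (a i 0).toNat + (a i 1).toNat + (a i 2).toNat + (a i 3).toNat + (a i 4).toNat := by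
    intro i
    have hset : {b | D (E i) b} = E '' {j | a i j = true} := by
      ext b
      constructor
      · intro hb
        obtain ⟨j, rfl⟩ := Esurj b
        exact ⟨j, (haT i j).mpr hb, rfl⟩
      · rintro ⟨j, hj, rfl⟩
        exact (haT i j).mp hj
    have h2 : {j | a i j = true} = ↑(Finset.univ.filter fun j => a i j = true) := by
      simp
    rw [outDeg, hset, Set.ncard_image_of_injective _ Einj, h2, Set.ncard_coe_finset,
      Finset.card_filter, Fin.sum_univ_five]
    have l1 : ∀ b : Bool, (if b = true then 1 else 0) = b.toNat := by decide
    simp only [l1]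
  -- bounds from hf
  have h0 : (a 0 1).toNat + (a 0 2).toNat + (a 0 3).toNat ≤ 1 := by
    have h := hf (E 0)
    rw [if_pos (show (0:Fin 4) ∈ (↑(E 0) : Sym2 (Fin 4)) by decide), key 0,
      hz 0 0 (Or.inl rfl), hz 0 4 (by simp)] at h
    simp only [Bool.toNat_false] at h; omega
  have h1 : (a 1 0).toNat + (a 1 2).toNat + (a 1 4).toNat ≤ 1 := by
    have h := hf (E 1)
    rw [if_pos (show (0:Fin 4) ∈ (↑(E 1) : Sym2 (Fin 4)) by decide), key 1,
      hz 1 1 (Or.inl rfl), hz 1 3 (by simp)] at h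
    simp only [Bool.toNat_false] at h; omega
  have h2 : (a 2 0).toNat + (a 2 1).toNat + (a 2 3).toNat + (a 2 4).toNat ≤ 2 := by
    have h := hf (E 2)
    rw [if_neg (show ¬ ((0:Fin 4) ∈ (↑(E 2) : Sym2 (Fin 4))) by decide), key 2,
      hz 2 2 (Or.inl rfl)] at h
    simp only [Bool.toNat_false] at h; omega
  have h3 : (a 3 0).toNat + (a 3 2).toNat + (a 3 4).toNat ≤ 2 := by
    have h := hf (E 3)
    rw [if_neg (show ¬ ((0:Fin 4) ∈ (↑(E 3) : Sym2 (Fin 4))) by decide), key 3,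
      hz 3 3 (Or.inl rfl), hz 3 1 (by simp)] at h
    simp only [Bool.toNat_false] at h; omega
  have h4 : (a 4 1).toNat + (a 4 2).toNat + (a 4 3).toNat ≤ 2 := by
    have h := hf (E 4)
    rw [if_neg (show ¬ ((0:Fin 4) ∈ (↑(E 4) : Sym2 (Fin 4))) by decide), key 4,
      hz 4 4 (Or.inl rfl), hz 4 0 (by simp)] at h
    simp only [Bool.toNat_false] at h; omega
  have hpair : ((a 0 1 || a 1 0) && (a 0 2 || a 2 0) && (a 0 3 || a 3 0) && (a 1 2 || a 2 1)
      && (a 1 4 || a 4 1) && (a 2 3 || a 3 2) && (a 2 4 || a 4 2) && (a 3 4 || a 4 3)) = true := by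
    simp only [Bool.and_eq_true]
    refine ⟨⟨⟨⟨⟨⟨⟨?_, ?_⟩, ?_⟩, ?_⟩, ?_⟩, ?_⟩, ?_⟩, ?_⟩ <;> apply hp <;> simp
  obtain ⟨zb, hzb⟩ := core (a 0 1) (a 1 0) (a 0 2) (a 2 0) (a 0 3) (a 3 0) (a 1 2) (a 2 1)
    (a 1 4) (a 4 1) (a 2 3) (a 3 2) (a 2 4) (a 4 2) (a 3 4) (a 4 3) hpair h0 h1 h2 h3 h4
  have hmk : ∀ i j, mk5 (a 0 1) (a 1 0) (a 0 2) (a 2 0) (a 0 3) (a 3 0) (a 1 2) (a 2 1)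
      (a 1 4) (a 4 1) (a 2 3) (a 3 2) (a 2 4) (a 4 2) (a 3 4) (a 4 3) i j = a i j := by
    intro i j
    fin_cases i <;> fin_cases j <;>
      first
      | rfl
      | (exact (hz _ _ (by simp)).symm)
  obtain ⟨S, hSZ, hind, habs⟩ := hKP (E '' {j | zb j = true})
  apply hzb (fun j => decide (E j ∈ S))
  refine ⟨?_, ?_, ?_⟩
  · intro j hj
    obtain ⟨j', hj', hEq⟩ := hSZ (of_decide_eq_true hj)
    exact Einj hEq ▸ hj'
  · intro i j hi hj
    rw [hmk]
    exact decide_eq_false (hind _ (of_decide_eq_true hi) _ (of_decide_eq_true hj))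
  · intro i hiz his
    obtain ⟨s, hsS, hDs⟩ := habs (E i) ⟨i, hiz, rfl⟩ (of_decide_eq_false his)
    obtain ⟨j, rfl⟩ := Esurj s
    exact ⟨j, decide_eq_true hsS, by rw [hmk]; exact decide_eq_true hDs⟩
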